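/- arXiv:1511.07044 — 5 statements merged into one kernel-verified Lean document; each statement's English description precedes it below -/
import Mathlib

section
/- Let V and W be real vector spaces, let S ⊆ V and T ⊆ W be nonempty subsets, and let J = { (s, t) ∈ V × W : s ∈ S ∪ {0} and t ∈ T ∪ {0} } ∖ {(0,0)} (the affine cone of the join of S and T). Then for every nonzero x ∈ V and nonzero y ∈ W, one has rank_J((x, y)) = max( rank_S(x), rank_T(y) ). -/
open scoped BigOperators

/-- The real rank of `p` with respect to a subset `S` of a real vector space:
the least `r : ℕ∞` such that `p` is a sum of `r` elements of `S` (`∞` if none exists). -/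
noncomputable def realRank {V : Type*} [AddCommMonoid V] (S : Set V) (p : V) : ℕ∞ :=
  sInf ((fun n : ℕ => (n : ℕ∞)) ''
    {r : ℕ | ∃ x : Fin r → V, (∀ i, x i ∈ S) ∧ ∑ i, x i = p})

lemma realRank_le {V : Type*} [AddCommMonoid V] {S : Set V} {p : V} {r : ℕ}
    (x : Fin r → V) (hx : ∀ i, x i ∈ S) (hs : ∑ i, x i = p) :
    realRank S p ≤ r :=
  sInf_le ⟨r, ⟨x, hx, hs⟩, rfl⟩

lemma exists_rep {V : Type*} [AddCommMonoid V] {S : Set V} {p : V} {r : ℕ}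
    (h : realRank S p = r) :
    ∃ x : Fin r → V, (∀ i, x i ∈ S) ∧ ∑ i, x i = p := by
  classical
  set A := {r : ℕ | ∃ x : Fin r → V, (∀ i, x i ∈ S) ∧ ∑ i, x i = p} with hA
  have hne : A.Nonempty := by
    by_contra hemp
    rw [Set.not_nonempty_iff_eq_empty] at hemp
    have : realRank S p = ⊤ := by
      rw [realRank, ← hA, hemp]
      simp
    rw [h] at this
    exact (ENat.coe_ne_top r) this
  have hmem : sInf A ∈ A := Nat.sInf_mem hne
  have h1 : realRank S p ≤ ((sInf A : ℕ) : ℕ∞) := sInf_le (Set.mem_image_of_mem _ hmem)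
  have h2 : ((sInf A : ℕ) : ℕ∞) ≤ realRank S p := by
    apply le_sInf
    rintro _ ⟨m, hm, rfl⟩
    exact Nat.cast_le.mpr (Nat.sInf_le hm)
  have : (r : ℕ∞) = ((sInf A : ℕ) : ℕ∞) := by rw [← h]; exact le_antisymm h1 h2
  have hr : r = sInf A := by exact_mod_cast this
  rw [hr]; exact hmem

lemma strip_zeros {V : Type*} [AddCommMonoid V] {S : Set V} {p : V} :
    ∀ r : ℕ, ∀ x : Fin r → V, (∀ i, x i ∈ insert (0:V) S) → ∑ i, x i = p →
    ∃ k ≤ r, ∃ y : Fin k → V, (∀ i, y i ∈ S) ∧ ∑ i, y i = p := by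
  classical
  intro r
  induction r with
  | zero => intro x hx hs; exact ⟨0, le_refl 0, x, fun i => i.elim0, hs⟩
  | succ m ih =>
    intro x hx hs
    by_cases hz : ∃ j, x j = 0
    · obtain ⟨j, hj⟩ := hz
      have hsum : ∑ i : Fin m, x (j.succAbove i) = p := by
        rw [Fin.sum_univ_succAbove x j] at hs
        rw [hj, zero_add] at hs
        exact hs
      obtain ⟨k, hk, y, hy, hys⟩ := ih (fun i => x (j.succAbove i))
        (fun i => hx _) hsum
      exact ⟨k, hk.trans (Nat.le_succ m), y, hy, hys⟩
    · push_neg at hz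
      refine ⟨m + 1, le_refl _, x, fun i => ?_, hs⟩
      rcases hx i with h0 | hmem
      · exact absurd h0 (hz i)
      · exact hmem

lemma exists_rep_ne_zero {V : Type*} [AddCommMonoid V] {S : Set V} {p : V} {r : ℕ}
    (h : realRank S p = r) :
    ∃ x : Fin r → V, (∀ i, x i ∈ S) ∧ (∀ i, x i ≠ 0) ∧ ∑ i, x i = p := by
  classical
  obtain ⟨x, hx, hs⟩ := exists_rep h
  by_cases hz : ∃ j, x j = 0
  · obtain ⟨j, hj⟩ := hz
    cases r with
    | zero => exact j.elim0
    | succ m =>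
      have hsum : ∑ i : Fin m, x (j.succAbove i) = p := by
        rw [Fin.sum_univ_succAbove x j, hj, zero_add] at hs
        exact hs
      have hle : realRank S p ≤ m := realRank_le _ (fun i => hx _) hsum
      rw [h] at hle
      exact absurd hle (by exact_mod_cast Nat.not_succ_le_self m)
  · push_neg at hz
    exact ⟨x, hx, hz, hs⟩

lemma pad_sum {M : Type*} [AddCommMonoid M] {a b : ℕ} (hab : a ≤ b) (s : Fin a → M) :
    ∑ i : Fin b, (if h : (i : ℕ) < a then s ⟨i, h⟩ else 0) = ∑ i, s i := by
  classical
  have h1 : ∑ i : Fin b, (if h : (i : ℕ) < a then s ⟨i, h⟩ else 0)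
      = ∑ i ∈ Finset.range b, (if h : i < a then s ⟨i, h⟩ else 0) :=
    Fin.sum_univ_eq_sum_range (fun i => if h : i < a then s ⟨i, h⟩ else 0) b
  have h2 : ∑ i, s i = ∑ i ∈ Finset.range a, (if h : i < a then s ⟨i, h⟩ else 0) := by
    rw [← Fin.sum_univ_eq_sum_range (fun i => if h : i < a then s ⟨i, h⟩ else 0) a]
    apply Finset.sum_congr rfl
    intro i _
    rw [dif_pos i.isLt]
  rw [h1, h2]
  apply (Finset.sum_subset (Finset.range_subset_range.mpr hab) ?_).symm
  intro i _ hi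
  rw [dif_neg (Finset.mem_range.not.mp hi)]


/-- The real rank with respect to (the affine cone of) the join of `S` and `T` of a point
`(x, y)` with `x ≠ 0` and `y ≠ 0` is the maximum of the real ranks of `x` and `y`. -/
theorem statement3 {V W : Type*} [AddCommGroup V] [Module ℝ V] [AddCommGroup W] [Module ℝ W]
    (S : Set V) (T : Set W) (hS : S.Nonempty) (hT : T.Nonempty)
    (J : Set (V × W))
    (hJ : J = {st : V × W | st.1 ∈ S ∪ {0} ∧ st.2 ∈ T ∪ {0}} \ {(0, 0)})
    (x : V) (y : W) (hx : x ≠ 0) (hy : y ≠ 0) :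
    realRank J (x, y) = max (realRank S x) (realRank T y) := by
  classical
  have hSU : S ∪ {0} = insert (0:V) S := Set.union_singleton
  have hTU : T ∪ {0} = insert (0:W) T := Set.union_singleton
  have hge : max (realRank S x) (realRank T y) ≤ realRank J (x, y) := by
    by_cases htop : realRank J (x, y) = ⊤
    · rw [htop]; exact le_top
    · obtain ⟨r, hr⟩ := WithTop.ne_top_iff_exists.mp htop
      obtain ⟨p, hp, hps⟩ := exists_rep hr.symm
      have hp' : ∀ i, p i ∈ {st : V × W | st.1 ∈ S ∪ {0} ∧ st.2 ∈ T ∪ {0}} := by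
        intro i
        have := hp i
        rw [hJ] at this
        exact this.1
      have hfst : ∑ i, (p i).1 = x := by
        have := congrArg Prod.fst hps
        rw [Prod.fst_sum] at this
        exact this
      have hsnd : ∑ i, (p i).2 = y := by
        have := congrArg Prod.snd hps
        rw [Prod.snd_sum] at this
        exact this
      apply max_le
      · obtain ⟨k, hk, s, hsmem, hssum⟩ := strip_zeros r (fun i => (p i).1)
          (fun i => hSU ▸ (hp' i).1) hfst
        calc realRank S x ≤ (k : ℕ∞) := realRank_le s hsmem hssum
          _ ≤ (r : ℕ∞) := by exact_mod_cast hk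
          _ = realRank J (x, y) := hr.symm ▸ rfl
      · obtain ⟨k, hk, t, htmem, htsum⟩ := strip_zeros r (fun i => (p i).2)
          (fun i => hTU ▸ (hp' i).2) hsnd
        calc realRank T y ≤ (k : ℕ∞) := realRank_le t htmem htsum
          _ ≤ (r : ℕ∞) := by exact_mod_cast hk
          _ = realRank J (x, y) := hr.symm ▸ rfl
  have hle : realRank J (x, y) ≤ max (realRank S x) (realRank T y) := by
    by_cases hSx : realRank S x = ⊤
    · rw [hSx]; simp
    by_cases hTy : realRank T y = ⊤
    · rw [hTy]; simp
    obtain ⟨a, ha⟩ := WithTop.ne_top_iff_exists.mp hSx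
    obtain ⟨b, hb⟩ := WithTop.ne_top_iff_exists.mp hTy
    obtain ⟨s, hsmem, hsne, hssum⟩ := exists_rep_ne_zero ha.symm
    obtain ⟨t, htmem, htne, htsum⟩ := exists_rep_ne_zero hb.symm
    rcases le_total a b with hab | hba
    · set f : Fin b → V × W := fun i => (if h : (i : ℕ) < a then s ⟨i, h⟩ else 0, t i) with hf
      have hmem : ∀ i, f i ∈ J := by
        intro i
        rw [hJ]
        constructor
        · constructor
          · by_cases h : (i : ℕ) < a
            · simp only [hf, dif_pos h]
              exact Set.mem_union_left _ (hsmem ⟨i, h⟩)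
            · simp only [hf, dif_neg h]
              exact Set.mem_union_right _ rfl
          · exact Set.mem_union_left _ (htmem i)
        · intro hcontra
          apply htne i
          have : f i = (0, 0) := hcontra
          exact congrArg Prod.snd this
      have hsum : ∑ i, f i = (x, y) := by
        apply Prod.ext
        · rw [Prod.fst_sum]
          simp only [hf]
          rw [pad_sum hab s]
          exact hssum
        · rw [Prod.snd_sum]
          simp only [hf]
          exact htsum
      have h1 : realRank J (x, y) ≤ realRank T y := by
        rw [← hb]; exact_mod_cast realRank_le f hmem hsum
      exact h1.trans (le_max_right _ _)
    · set f : Fin a → V × W := fun i => (s i, if h : (i : ℕ) < b then t ⟨i, h⟩ else 0) with hf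
      have hmem : ∀ i, f i ∈ J := by
        intro i
        rw [hJ]
        constructor
        · constructor
          · exact Set.mem_union_left _ (hsmem i)
          · by_cases h : (i : ℕ) < b
            · simp only [hf, dif_pos h]
              exact Set.mem_union_left _ (htmem ⟨i, h⟩)
            · simp only [hf, dif_neg h]
              exact Set.mem_union_right _ rfl
        · intro hcontra
          apply hsne i
          have : f i = (0, 0) := hcontra
          exact congrArg Prod.fst this
      have hsum : ∑ i, f i = (x, y) := by
        apply Prod.ext
        · rw [Prod.fst_sum]
          simp only [hf]
          exact hssum
        · rw [Prod.snd_sum]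
          simp only [hf]
          rw [pad_sum hba t]
          exact htsum
      have h1 : realRank J (x, y) ≤ realRank S x := by
        rw [← ha]; exact_mod_cast realRank_le f hmem hsum
      exact h1.trans (le_max_left _ _)
  exact le_antisymm hle hge
end

section
/- Let n ≥ 1, let S ⊆ ℝ^{n+1} be a cone whose linear span is all of ℝ^{n+1}, let p ∈ ℝ^{n+1} be nonzero, and let c be a natural number with c + 1 ≤ n + 1. Assume that for every linear subspace W ⊆ ℝ^{n+1} with dim W = c + 1 and p ∈ W, the set of one-dimensional subspaces { ℝ·x : x ∈ (S ∩ W) ∖ {0} } has at most c elements. Then rank_S(p) ≥ c + 2. -/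
open scoped BigOperators

/-! If `p = x₁ + ⋯ + x_r` with `xᵢ ∈ S` and `r ≤ c + 1`, pick a linearly independent subset of
the `xᵢ` with the same span and extend it, inside the spanning set `S`, to `c + 1` linearly
independent vectors. Their span `W` has dimension `c + 1` and contains `p`, and the `c + 1`
vectors span pairwise distinct lines of `S ∩ W`. -/

open Submodule Module

theorem le_realRank_of_forall_sum_eq {V : Type*} [AddCommMonoid V] {S : Set V} {p : V} {k : ℕ}
    (h : ∀ r (x : Fin r → V), (∀ i, x i ∈ S) → ∑ i, x i = p → k ≤ r) :
    (k : ℕ∞) ≤ realRank S p :=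
  le_sInf <| by rintro _ ⟨r, ⟨x, hxS, hx⟩, rfl⟩; exact Nat.cast_le.mpr (h r x hxS hx)

section

variable {K V : Type*} [DivisionRing K] [AddCommGroup V] [Module K V]

theorem LinearIndepOn.injOn_span_singleton {B : Set V} (hB : LinearIndepOn K id B) :
    B.InjOn (fun x => K ∙ x) := by
  intro u hu v hv (huv : K ∙ u = K ∙ v)
  by_contra hne
  have hv_span : K ∙ v ≤ span K (B \ {u}) :=
    span_mono (Set.singleton_subset_iff.mpr ⟨hv, Ne.symm hne⟩)
  exact hB.notMem_span hu (by simpa using hv_span (huv ▸ mem_span_singleton_self u))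

variable [FiniteDimensional K V]

theorem LinearIndepOn.finrank_span_eq_encard {B : Set V} (hB : LinearIndepOn K id B) :
    (finrank K (span K B) : ℕ∞) = B.encard := by
  rw [← toENat_rank_span_set hB, Set.image_id, ← finrank_eq_rank]
  simp

theorem exists_linearIndepOn_superset_encard_eq {S s : Set V} (hS : span K S = ⊤)
    (hs : LinearIndepOn K id s) (hsS : s ⊆ S) {k : ℕ} (hsk : s.encard ≤ k)
    (hk : k ≤ finrank K V) :
    ∃ B, s ⊆ B ∧ B ⊆ S ∧ LinearIndepOn K id B ∧ B.encard = k := by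
  obtain ⟨b, hbS, hsb, hSb, hb⟩ := exists_linearIndepOn_id_extension hs hsS
  have hb_top : span K b = ⊤ := top_le_iff.mp (hS ▸ span_le.mpr hSb)
  have hb_card : b.encard = finrank K V := by
    rw [← hb.finrank_span_eq_encard, hb_top, finrank_top]
  obtain ⟨B, hsB, hBb, hB⟩ :=
    Set.exists_superset_subset_encard_eq hsb hsk (hb_card ▸ by exact_mod_cast hk)
  exact ⟨B, hsB, hBb.trans hbS, hb.mono hBb, hB⟩

theorem exists_submodule_finrank_eq_le_encard_lines {S : Set V} (hS : span K S = ⊤) {r k : ℕ}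
    (x : Fin r → V) (hxS : ∀ i, x i ∈ S) (hrk : r ≤ k) (hk : k ≤ finrank K V) :
    ∃ W : Submodule K V, finrank K W = k ∧ ∑ i, x i ∈ W ∧
      (k : ℕ∞) ≤ {L : Submodule K V | ∃ y ∈ S ∩ (W : Set V), y ≠ 0 ∧ L = K ∙ y}.encard := by
  obtain ⟨s, hs_range, hs_span, hs⟩ := exists_linearIndependent K (Set.range x)
  have hs_card : s.encard ≤ k := calc
    s.encard ≤ (Set.range x).encard := Set.encard_le_encard hs_range
    _ ≤ r := by rw [← Set.image_univ]; exact (Set.encard_image_le _ _).trans (by simp)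
    _ ≤ k := by exact_mod_cast hrk
  obtain ⟨B, hsB, hBS, hB, hB_card⟩ := exists_linearIndepOn_superset_encard_eq hS
    hs (hs_range.trans (Set.range_subset_iff.mpr hxS)) hs_card hk
  refine ⟨span K B, by exact_mod_cast hB.finrank_span_eq_encard.trans hB_card, ?_, ?_⟩
  · exact span_mono hsB (hs_span.symm ▸ sum_mem fun i _ => subset_span ⟨i, rfl⟩)
  · rw [← hB_card, ← hB.injOn_span_singleton.encard_image]
    refine Set.encard_le_encard ?_
    rintro _ ⟨y, hy, rfl⟩
    exact ⟨y, ⟨hBS hy, subset_span hy⟩, hB.ne_zero hy, rfl⟩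

end

theorem statement4_general (n : ℕ) (S : Set (Fin (n + 1) → ℝ))
    (hspan : Submodule.span ℝ S = ⊤)
    (p : Fin (n + 1) → ℝ)
    (c : ℕ) (hc : c + 1 ≤ n + 1)
    (hW : ∀ W : Submodule ℝ (Fin (n + 1) → ℝ), Module.finrank ℝ W = c + 1 → p ∈ W →
      {L : Submodule ℝ (Fin (n + 1) → ℝ) |
        ∃ x ∈ S ∩ (W : Set (Fin (n + 1) → ℝ)), x ≠ 0 ∧ L = Submodule.span ℝ {x}}.encard ≤ c) :
    (c + 2 : ℕ) ≤ realRank S p := by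
  refine le_realRank_of_forall_sum_eq fun r x hxS hx => ?_
  by_contra! hr
  obtain ⟨W, hW_dim, hpW, hW_lines⟩ := exists_submodule_finrank_eq_le_encard_lines hspan x hxS
    (k := c + 1) (by omega) (by rwa [Module.finrank_fin_fun])
  have h := hW_lines.trans (hW W hW_dim (hx ▸ hpW))
  norm_cast at h
  omega

/-- If `S ⊆ ℝ^{n+1}` is a spanning cone and every linear subspace `W` of dimension `c + 1`
through `p ≠ 0` meets `S` in at most `c` one-dimensional subspaces, then the real rank of `p`
with respect to `S` is at least `c + 2`. -/
theorem statement4 (n : ℕ) (hn : 1 ≤ n) (S : Set (Fin (n + 1) → ℝ))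
    (hcone : ∀ (lam : ℝ) (x : Fin (n + 1) → ℝ), x ∈ S → lam • x ∈ S)
    (hspan : Submodule.span ℝ S = ⊤)
    (p : Fin (n + 1) → ℝ) (hp : p ≠ 0)
    (c : ℕ) (hc : c + 1 ≤ n + 1)
    (hW : ∀ W : Submodule ℝ (Fin (n + 1) → ℝ), Module.finrank ℝ W = c + 1 → p ∈ W →
      {L : Submodule ℝ (Fin (n + 1) → ℝ) |
        ∃ x ∈ S ∩ (W : Set (Fin (n + 1) → ℝ)), x ≠ 0 ∧ L = Submodule.span ℝ {x}}.encard ≤ c) :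
    (c + 2 : ℕ) ≤ realRank S p :=
  statement4_general n S hspan p c hc hW
end

section
/- Let C = { (x₀, x₁, x₂, x₃) ∈ ℝ⁴ : x₁x₃ − x₂² = 0 and x₂²x₀ − (x₁² + x₀²)(x₁ − x₀) = 0 }. Then the point p = (1, 0, 0, 0) has real rank exactly 4 with respect to C: p is a sum of 4 elements of C, but p is not a sum of 3 or fewer elements of C. -/
open scoped BigOperators

/-- The affine cone in `ℝ⁴` over the space curve cut out by `x₁x₃ - x₂² = 0` and
`x₂²x₀ - (x₁² + x₀²)(x₁ - x₀) = 0`. -/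
def spaceCurve : Set (Fin 4 → ℝ) :=
  {x | x 1 * x 3 - x 2 ^ 2 = 0 ∧ x 2 ^ 2 * x 0 - (x 1 ^ 2 + x 0 ^ 2) * (x 1 - x 0) = 0}

/-!
The quadric `x₁x₃ = x₂²` says that the symmetric matrix `[[x₁, x₂], [x₂, x₃]]` has rank at most
one. If `x + y + z = (1, 0, 0, 0)` with `x, y, z` on the curve, these three matrices sum to zero,
and polarising the determinant shows that they are pairwise proportional. The cubic then forces the
pairs `(x₀, x₁)` to be proportional as well, so `x₁ (x₀ + y₀ + z₀) = x₀ (x₁ + y₁ + z₁) = 0`; hence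
every `x₁` vanishes, then every `x₀`, contradicting `x₀ + y₀ + z₀ = 1`. Since `0` lies on the
curve, sums of fewer points are padded with zeros. An explicit sum of four points gives the upper
bound.
-/

section RealRank

variable {V : Type*} [AddCommMonoid V] {S : Set V} {p : V}

theorem realRank_le_of_sum_eq {n : ℕ} (x : Fin n → V) (hx : ∀ i, x i ∈ S)
    (hp : ∑ i, x i = p) : realRank S p ≤ n :=
  sInf_le ⟨n, ⟨x, hx, hp⟩, rfl⟩

theorem exists_sum_eq_of_le (h0 : 0 ∈ S) {m n : ℕ} (hmn : m ≤ n) (x : Fin m → V)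
    (hx : ∀ i, x i ∈ S) (hp : ∑ i, x i = p) :
    ∃ y : Fin n → V, (∀ i, y i ∈ S) ∧ ∑ i, y i = p := by
  obtain ⟨k, rfl⟩ := Nat.exists_eq_add_of_le hmn
  refine ⟨Fin.append x 0, Fin.addCases (by simpa using hx) (by simpa using fun _ => h0), ?_⟩
  simp [Fin.sum_univ_add, hp]

theorem add_one_le_realRank_of_zero_mem (h0 : 0 ∈ S) {n : ℕ}
    (h : ∀ x : Fin n → V, (∀ i, x i ∈ S) → ∑ i, x i ≠ p) : (n : ℕ∞) + 1 ≤ realRank S p := by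
  refine le_sInf ?_
  rintro _ ⟨r, ⟨x, hx, hp⟩, rfl⟩
  by_contra! hr
  have hrn : r ≤ n := by exact_mod_cast Order.le_of_lt_add_one hr
  obtain ⟨y, hy, hyp⟩ := exists_sum_eq_of_le h0 hrn x hx hp
  exact h y hy hyp

end RealRank

theorem mul_eq_mul_of_mul_add_eq_sq_add {R : Type*} [CommRing R] [IsReduced R]
    {a₁ a₂ a₃ b₁ b₂ b₃ : R} (ha : a₁ * a₃ = a₂ ^ 2) (hb : b₁ * b₃ = b₂ ^ 2)
    (hab : (a₁ + b₁) * (a₃ + b₃) = (a₂ + b₂) ^ 2) : a₁ * b₃ = a₃ * b₁ := by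
  have hpolar : a₁ * b₃ + a₃ * b₁ = 2 * (a₂ * b₂) := by linear_combination hab - ha - hb
  have hsq : (a₁ * b₃ - a₃ * b₁) ^ 2 = 0 := by
    linear_combination (a₁ * b₃ + a₃ * b₁ + 2 * (a₂ * b₂)) * hpolar
      - 4 * (b₁ * b₃) * ha - 4 * a₂ ^ 2 * hb
  exact sub_eq_zero.mp (IsReduced.eq_zero _ ⟨2, hsq⟩)

namespace spaceCurve

variable {x y z : Fin 4 → ℝ}

theorem apply_zero_eq_zero_iff (hx : x ∈ spaceCurve) : x 0 = 0 ↔ x 1 = 0 := by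
  obtain ⟨hcone, hcubic⟩ := hx
  constructor
  · intro h0
    rw [h0] at hcubic
    exact pow_eq_zero_iff three_ne_zero |>.mp (by linear_combination -hcubic)
  · intro h1
    rw [h1] at hcone hcubic
    have h2 : x 2 ^ 2 = 0 := by linear_combination -hcone
    rw [h2] at hcubic
    exact pow_eq_zero_iff three_ne_zero |>.mp (by linear_combination hcubic)

theorem sq_apply_zero_le (hx : x ∈ spaceCurve) : x 0 ^ 2 ≤ x 0 * x 1 := by
  have hcubic := hx.2
  have hnonneg : 0 ≤ x 0 * (x 1 - x 0) * (x 1 ^ 2 + x 0 ^ 2) := by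
    rw [show x 0 * (x 1 - x 0) * (x 1 ^ 2 + x 0 ^ 2) = (x 0 * x 2) ^ 2 by
      linear_combination -(x 0) * hcubic]
    positivity
  rcases eq_or_ne (x 0) 0 with h | h
  · simp [h]
  · have hpos : 0 < x 1 ^ 2 + x 0 ^ 2 := by positivity
    linear_combination (mul_nonneg_iff_of_pos_right hpos).mp hnonneg

/- On the curve `x₃ / x₁ = (x₂ / x₁)² = f (x₀ / x₁)` with `f t = (1 + t²)(1 - t) / t`, which is
strictly decreasing on `(0, 1]`, where `x₀ / x₁` lies by `sq_apply_zero_le`. The factor `Q` below is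
`-x₀x₁y₀y₁` times the difference quotient of `f` at `x₀ / x₁` and `y₀ / y₁`. -/
theorem mul_apply_zero_eq_of_mul_apply_three_eq (hx : x ∈ spaceCurve) (hy : y ∈ spaceCurve)
    (h : x 1 * y 3 = x 3 * y 1) : x 1 * y 0 = x 0 * y 1 := by
  rcases eq_or_ne (x 0) 0 with hx0 | hx0
  · rw [hx0, (apply_zero_eq_zero_iff hx).mp hx0]; ring
  rcases eq_or_ne (y 0) 0 with hy0 | hy0
  · rw [hy0, (apply_zero_eq_zero_iff hy).mp hy0]; ring
  have hxle := sq_apply_zero_le hx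
  have hyle := sq_apply_zero_le hy
  obtain ⟨hxcone, hxcubic⟩ := hx
  obtain ⟨hycone, hycubic⟩ := hy
  have hsq : x 1 ^ 2 * y 2 ^ 2 = y 1 ^ 2 * x 2 ^ 2 := by
    linear_combination (-(x 1 ^ 2)) * hycone + (x 1 * y 1) * h + (y 1 ^ 2) * hxcone
  set Q := x 1 ^ 2 * y 1 ^ 2 - x 1 * y 1 * (x 0 * y 0) + x 1 * x 0 * y 0 ^ 2 + y 1 * y 0 * x 0 ^ 2
  have hfactor : (y 1 * x 0 - x 1 * y 0) * Q = 0 := by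
    linear_combination (-(x 1 ^ 2 * x 0)) * hycubic + (y 1 ^ 2 * y 0) * hxcubic + (x 0 * y 0) * hsq
  have hQ : 0 < Q := by
    have hx01 : 0 < x 0 * x 1 := (by positivity : 0 < x 0 ^ 2).trans_le hxle
    have hy01 : 0 < y 0 * y 1 := (by positivity : 0 < y 0 ^ 2).trans_le hyle
    have hprod : (x 0 * y 0) ^ 2 ≤ (x 0 * y 0) * (x 1 * y 1) := by
      linarith [mul_le_mul hxle hyle (by positivity) hx01.le]
    linarith [sq_nonneg (x 1 * y 1 - x 0 * y 0), mul_pos hx01 (by positivity : 0 < y 0 ^ 2),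
      mul_pos hy01 (by positivity : 0 < x 0 ^ 2)]
  linear_combination -(mul_eq_zero.mp hfactor).resolve_right hQ.ne'

theorem mul_apply_zero_eq_of_add_add (hx : x ∈ spaceCurve) (hy : y ∈ spaceCurve)
    (hz : z ∈ spaceCurve) (h1 : x 1 + y 1 + z 1 = 0) (h2 : x 2 + y 2 + z 2 = 0)
    (h3 : x 3 + y 3 + z 3 = 0) : x 1 * y 0 = x 0 * y 1 := by
  refine mul_apply_zero_eq_of_mul_apply_three_eq hx hy
    (mul_eq_mul_of_mul_add_eq_sq_add (a₂ := x 2) (b₂ := y 2) ?_ ?_ ?_)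
  · linear_combination hx.1
  · linear_combination hy.1
  · linear_combination hz.1 + (x 3 + y 3) * h1 - z 1 * h3 - (x 2 + y 2 - z 2) * h2

theorem add_add_ne (hx : x ∈ spaceCurve) (hy : y ∈ spaceCurve) (hz : z ∈ spaceCurve) :
    x + y + z ≠ ![1, 0, 0, 0] := by
  intro hsum
  have h0 : x 0 + y 0 + z 0 = 1 := by simpa using congrFun hsum 0
  have h1 : x 1 + y 1 + z 1 = 0 := by simpa using congrFun hsum 1
  have h2 : x 2 + y 2 + z 2 = 0 := by simpa using congrFun hsum 2
  have h3 : x 3 + y 3 + z 3 = 0 := by simpa using congrFun hsum 3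
  have hxy := mul_apply_zero_eq_of_add_add hx hy hz h1 h2 h3
  have hxz := mul_apply_zero_eq_of_add_add hx hz hy (by linarith) (by linarith) (by linarith)
  have hyz := mul_apply_zero_eq_of_add_add hy hz hx (by linarith) (by linarith) (by linarith)
  have hx1 : x 1 = 0 := by linear_combination hxy + hxz + x 0 * h1 - x 1 * h0
  have hy1 : y 1 = 0 := by linear_combination hyz - hxy + y 0 * h1 - y 1 * h0
  have hz1 : z 1 = 0 := by linear_combination -hxz - hyz + z 0 * h1 - z 1 * h0
  have hx0 := (apply_zero_eq_zero_iff hx).mpr hx1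
  have hy0 := (apply_zero_eq_zero_iff hy).mpr hy1
  have hz0 := (apply_zero_eq_zero_iff hz).mpr hz1
  linarith

theorem exists_sum_four_eq :
    ∃ x : Fin 4 → Fin 4 → ℝ, (∀ i, x i ∈ spaceCurve) ∧ ∑ i, x i = ![1, 0, 0, 0] := by
  refine ⟨![![-1/2, -1, -√5/2, -5/4], ![-1/2, -1, √5/2, -5/4], ![2, 2, 0, 0], ![0, 0, 0, 5/2]],
    ?_, ?_⟩
  · intro i
    fin_cases i <;> simp [spaceCurve, div_pow] <;> norm_num
  · ext j
    fin_cases j <;> simp [Fin.sum_univ_four] <;> ring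

end spaceCurve

/-- The point `(1,0,0,0)` has real rank exactly `4` with respect to this curve:
it is a sum of `4` elements of the curve but not of `3` or fewer. -/
theorem statement7 : realRank spaceCurve ![1, 0, 0, 0] = 4 := by
  obtain ⟨x, hx, hsum⟩ := spaceCurve.exists_sum_four_eq
  refine le_antisymm (realRank_le_of_sum_eq x hx hsum) ?_
  have hzero : (0 : Fin 4 → ℝ) ∈ spaceCurve := by simp [spaceCurve]
  refine add_one_le_realRank_of_zero_mem (n := 3) hzero fun y hy => ?_
  rw [Fin.sum_univ_three]
  exact spaceCurve.add_add_ne (hy 0) (hy 1) (hy 2)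
end

section
/- For every pair of real numbers (a, b), there is exactly one real number t satisfying b²·t = (a² + t²)(a − t). (Equivalently: for all real x₁, x₂, the cubic polynomial x₂²·x₀ − (x₁² + x₀²)(x₁ − x₀) in the variable x₀ has exactly one real root.) -/
/-- For every pair of real numbers `(a, b)` there is exactly one real `t` with
`b² t = (a² + t²)(a - t)`: the cubic `x₂² x₀ - (x₁² + x₀²)(x₁ - x₀)` in `x₀` has exactly
one real root for any real values of `x₁, x₂`. -/
theorem statement8 (a b : ℝ) : ∃! t : ℝ, b ^ 2 * t = (a ^ 2 + t ^ 2) * (a - t) := by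
  have ha : -|a| ≤ a := neg_abs_le a
  have ha' : a ≤ |a| := le_abs_self a
  have hab : (0:ℝ) ≤ |a| := abs_nonneg a
  set f : ℝ → ℝ := fun t => (a ^ 2 + t ^ 2) * (a - t) - b ^ 2 * t with hf
  have hcont : Continuous f := by fun_prop
  set L : ℝ := -(|a| + 1) with hL
  set R : ℝ := |a| + b ^ 2 + 1 with hR
  have hLR : L ≤ R := by nlinarith [sq_nonneg b]
  have hfL : 0 ≤ f L := by
    simp only [hf, hL]
    nlinarith [sq_nonneg b, sq_nonneg (|a| + 1), sq_abs a]
  have hfR : f R ≤ 0 := by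
    simp only [hf, hR]
    nlinarith [sq_nonneg b, sq_nonneg (|a| + b ^ 2 + 1), sq_abs a, sq_nonneg (b^2)]
  have hmem : (0:ℝ) ∈ Set.Icc (f R) (f L) := ⟨hfR, hfL⟩
  have hsub := intermediate_value_Icc' hLR hcont.continuousOn
  obtain ⟨t, _, htz⟩ := hsub hmem
  refine ⟨t, ?_, ?_⟩
  · have : (a ^ 2 + t ^ 2) * (a - t) - b ^ 2 * t = 0 := htz
    linarith
  · intro s hs
    have hteq : b ^ 2 * t = (a ^ 2 + t ^ 2) * (a - t) := by
      have : (a ^ 2 + t ^ 2) * (a - t) - b ^ 2 * t = 0 := htz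
      linarith
    have key : (s - t) * ((2 * a - (s + t)) ^ 2 + (s - t) ^ 2 + 2 * (s + t) ^ 2 + 4 * b ^ 2) = 0 := by
      linear_combination 4 * hs - 4 * hteq
    rcases mul_eq_zero.mp key with h | h
    · linarith
    · nlinarith [sq_nonneg (2 * a - (s + t)), sq_nonneg (s - t), sq_nonneg (s + t), sq_nonneg b, sq_nonneg (s - t)]
end

section
/- Let I ⊆ ℝ[x₀,…,x_n] be a homogeneous ideal, let d ≥ 1 and k ∈ ℕ. For a linear form ℓ ∈ ℝ[x₀,…,x_n]₁, let Q(ℓ) = dim_ℝ( ℝ[x₀,…,x_n]_d / (I_d + ℓ·ℝ[x₀,…,x_n]_{d−1}) ), where I_d denotes the degree-d graded piece of I, ℝ[x₀,…,x_n]_d the space of degree-d forms, and ℓ·ℝ[x₀,…,x_n]_{d−1} the space of multiples of ℓ of degree d. If (ℓ_j)_{j∈ℕ} is a sequence of linear forms converging coefficient-wise to a linear form ℓ and Q(ℓ_j) ≥ k for all j, then Q(ℓ) ≥ k. -/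
open scoped BigOperators
open MvPolynomial

/-- The codimension, in the space of degree-`d` forms, of `I_d + ℓ·ℝ[x]_{d-1}`:
`Q(ℓ) = dim_ℝ ( ℝ[x₀,…,x_n]_d / (I_d + ℓ·ℝ[x₀,…,x_n]_{d-1}) )`, where the linear form `ℓ`
has coefficient vector `a`. -/
noncomputable def hyperplaneSectionLength (n d : ℕ)
    (I : Ideal (MvPolynomial (Fin (n + 1)) ℝ)) (a : Fin (n + 1) → ℝ) : ℕ :=
  Module.finrank ℝ
    (↥(homogeneousSubmodule (Fin (n + 1)) ℝ d) ⧸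
      (Submodule.comap (homogeneousSubmodule (Fin (n + 1)) ℝ d).subtype
          (Submodule.restrictScalars ℝ I) ⊔
        Submodule.comap (homogeneousSubmodule (Fin (n + 1)) ℝ d).subtype
          (Submodule.map (LinearMap.mulLeft ℝ (∑ i, C (a i) * X i))
            (homogeneousSubmodule (Fin (n + 1)) ℝ (d - 1)))))

/-!
With `W = ℝ[x]_d` and `d = e + 1`, the subspace `I_d + ℓ·ℝ[x]_e` is the preimage in `W` of the range
of `ℝ[x]_e → W ⧸ I_d, q ↦ ℓ q`, so `Q(ℓ) = dim (W ⧸ I_d) - rank (q ↦ ℓ q mod I_d)`. This map depends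
linearly on the coefficients of `ℓ`, and the rank of a continuously varying linear map can only
jump up in the limit; hence `Q` can only jump down, i.e. it is upper semicontinuous.
-/

open Module Submodule Filter Topology

theorem LinearMap.eventually_finrank_range_le {𝕜 P E F : Type*} [NontriviallyNormedField 𝕜]
    [CompleteSpace 𝕜] [NormedAddCommGroup P] [NormedSpace 𝕜 P] [FiniteDimensional 𝕜 P]
    [AddCommGroup E] [Module 𝕜 E] [FiniteDimensional 𝕜 E]
    [AddCommGroup F] [Module 𝕜 F] [FiniteDimensional 𝕜 F]
    (Φ : P →ₗ[𝕜] E →ₗ[𝕜] F) (p₀ : P) :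
    ∀ᶠ p in 𝓝 p₀, finrank 𝕜 (range (Φ p₀)) ≤ finrank 𝕜 (range (Φ p)) := by
  let eE := (finBasis 𝕜 E).equivFun
  let eF := (finBasis 𝕜 F).equivFun
  let Ψ : P →ₗ[𝕜] (Fin (finrank 𝕜 E) → 𝕜) →L[𝕜] (Fin (finrank 𝕜 F) → 𝕜) :=
    toContinuousLinearMap.toLinearMap ∘ₗ (eE.arrowCongr eF).toLinearMap ∘ₗ Φ
  have hrank : ∀ p, (Ψ p).toLinearMap.rank = finrank 𝕜 (range (Φ p)) := fun p => by
    have hΨ : (Ψ p).toLinearMap = eF.toLinearMap ∘ₗ Φ p ∘ₗ eE.symm.toLinearMap := rfl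
    rw [LinearMap.rank, hΨ, range_comp, range_comp, LinearEquiv.range, Submodule.map_top,
      ← finrank_eq_rank, LinearEquiv.finrank_map_eq]
  have hopen := (isOpen_setOfPred_nat_le_rank (𝕜 := 𝕜) (finrank 𝕜 (range (Φ p₀)))).preimage
    Ψ.continuous_of_finiteDimensional
  filter_upwards [hopen.mem_nhds (by simp [hrank])] with p hp
  simpa [hrank] using hp

namespace MvPolynomial

instance {σ R : Type*} [CommSemiring R] [Finite σ] (n : ℕ) :
    Module.Finite R (homogeneousSubmodule σ R n) :=
  Module.Finite.iff_fg.mpr (homogeneousSubmodule_fg σ R n)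

variable {σ R : Type*} [CommSemiring R] [Fintype σ]

theorem isHomogeneous_sum_C_mul_X (a : σ → R) : (∑ i, C (a i) * X i).IsHomogeneous 1 :=
  IsHomogeneous.sum _ _ _ fun _ _ => isHomogeneous_C_mul_X _ _

noncomputable def linearFormMul (e : ℕ) :
    (σ → R) →ₗ[R] homogeneousSubmodule σ R e →ₗ[R] homogeneousSubmodule σ R (e + 1) :=
  LinearMap.mk₂ R
    (fun a q => ⟨(∑ i, C (a i) * X i) * q, by
      simpa [add_comm] using (isHomogeneous_sum_C_mul_X a).mul q.2⟩)
    (fun a b q => by ext1; simp [Finset.sum_add_distrib, add_mul])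
    (fun c a q => by ext1; simp [smul_eq_C_mul, ← Finset.mul_sum, mul_assoc])
    (fun a q r => by ext1; simp [mul_add])
    (fun c a q => by ext1; simp)

theorem range_linearFormMul (e : ℕ) (a : σ → R) :
    LinearMap.range (linearFormMul e a) =
      Submodule.comap (homogeneousSubmodule σ R (e + 1)).subtype
        (Submodule.map (LinearMap.mulLeft R (∑ i, C (a i) * X i))
          (homogeneousSubmodule σ R e)) := by
  ext p
  simp [linearFormMul, Subtype.ext_iff]

end MvPolynomial

noncomputable def Ideal.degreePart {σ R : Type*} [CommSemiring R] (I : Ideal (MvPolynomial σ R))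
    (d : ℕ) : Submodule R (homogeneousSubmodule σ R d) :=
  Submodule.comap (homogeneousSubmodule σ R d).subtype (I.restrictScalars R)

theorem hyperplaneSectionLength_add_finrank_range (n e : ℕ)
    (I : Ideal (MvPolynomial (Fin (n + 1)) ℝ)) (a : Fin (n + 1) → ℝ) :
    hyperplaneSectionLength n (e + 1) I a +
        finrank ℝ (LinearMap.range ((linearFormMul e).compr₂ (I.degreePart (e + 1)).mkQ a)) =
      finrank ℝ (homogeneousSubmodule (Fin (n + 1)) ℝ (e + 1) ⧸ I.degreePart (e + 1)) := by
  have hQ : hyperplaneSectionLength n (e + 1) I a =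
      finrank ℝ (homogeneousSubmodule (Fin (n + 1)) ℝ (e + 1) ⧸
        (I.degreePart (e + 1) ⊔ LinearMap.range (linearFormMul e a))) := by
    -- `e + 1 - 1` in the definition reduces to `e`
    rw [range_linearFormMul]; rfl
  have hrange : LinearMap.range ((linearFormMul e).compr₂ (I.degreePart (e + 1)).mkQ a) =
      (LinearMap.range (linearFormMul e a)).map (I.degreePart (e + 1)).mkQ :=
    LinearMap.range_comp _ _
  rw [hQ, ← (Submodule.quotientQuotientEquivQuotientSup _ _).finrank_eq, hrange]
  exact Submodule.finrank_quotient_add_finrank _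

theorem statement15_general (n d k : ℕ) (hd : 1 ≤ d)
    (I : Ideal (MvPolynomial (Fin (n + 1)) ℝ))
    (aj : ℕ → (Fin (n + 1) → ℝ)) (a : Fin (n + 1) → ℝ)
    (hconv : ∀ i, Filter.Tendsto (fun j => aj j i) Filter.atTop (nhds (a i)))
    (hk : ∀ j, k ≤ hyperplaneSectionLength n d I (aj j)) :
    k ≤ hyperplaneSectionLength n d I a := by
  obtain ⟨e, rfl⟩ : ∃ e, d = e + 1 := ⟨d - 1, by omega⟩
  obtain ⟨j, hj⟩ := ((tendsto_pi_nhds.mpr hconv).eventually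
    (((linearFormMul e).compr₂ (I.degreePart (e + 1)).mkQ).eventually_finrank_range_le a)).exists
  have h₀ := hyperplaneSectionLength_add_finrank_range n e I a
  have h₁ := hyperplaneSectionLength_add_finrank_range n e I (aj j)
  have := hk j
  omega

/-- Semicontinuity: if a sequence of linear forms `ℓ_j` converges coefficient-wise to `ℓ` and
`Q(ℓ_j) ≥ k` for all `j`, then `Q(ℓ) ≥ k`, where `Q` is the codimension of `I_d + ℓ·ℝ[x]_{d-1}`
inside the degree-`d` forms, for a homogeneous ideal `I`. -/
theorem statement15 (n d k : ℕ) (hd : 1 ≤ d)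
    (I : Ideal (MvPolynomial (Fin (n + 1)) ℝ))
    (hhom : ∀ f ∈ I, ∀ e : ℕ, (homogeneousComponent e f) ∈ I)
    (aj : ℕ → (Fin (n + 1) → ℝ)) (a : Fin (n + 1) → ℝ)
    (hconv : ∀ i, Filter.Tendsto (fun j => aj j i) Filter.atTop (nhds (a i)))
    (hk : ∀ j, k ≤ hyperplaneSectionLength n d I (aj j)) :
    k ≤ hyperplaneSectionLength n d I a :=
  statement15_general n d k hd I aj a hconv hk
end
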